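/- arXiv:1407.2768 — 5 statements merged into one kernel-verified Lean document; each statement's English description precedes it below -/
import Mathlib

section
/- Let N ≥ n ≥ 1, let y ∈ ℝ^N, and let W₁, …, W_n : ℝ^N → ℝ^N be vector fields, each Lipschitz with constant L and bounded in norm by K, such that the vectors W₁(y), …, W_n(y) are linearly independent. Suppose Ψ : ℝⁿ → ℝ^N is twice continuously differentiable with ‖D²Ψ(a)‖ ≤ c₀ for all a ∈ ℝⁿ, and suppose that for every a ∈ ℝⁿ there is a continuously differentiable curve γ_a : [0,1] → ℝ^N with γ_a(0) = y, γ_a′(t) = Σ_{i=1}^n a_i W_i(γ_a(t)) for all t ∈ [0,1], and Ψ(a) = γ_a(1). Then there exist ε₁ > 0 and r > 0 such that |Ψ(a) − Ψ(a′)| ≥ ε₁ |a − a′| for all a, a′ in the closed ball of radius r centered at 0 in ℝⁿ. -/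
/-!
The flow curve `γ` moves with speed at most `K ∑ |aᵢ|`, so it stays within `O(|a|)` of `y`, and
since the fields are Lipschitz its velocity `∑ aᵢ Wᵢ(γ t)` differs from `T a = ∑ aᵢ Wᵢ(y)` by
`O(|a|²)`. Hence `Ψ a = y + T a + O(|a|²)`, so `DΨ(0) = T`, which is injective by linear
independence. A `C¹` map whose derivative at a point is injective is lower-Lipschitz near it.
-/

open Set Filter Asymptotics

theorem norm_sum_smul_le {ι F : Type*} [Fintype ι] [SeminormedAddCommGroup F] [NormedSpace ℝ F]
    (a : ι → ℝ) {v : ι → F} {C : ℝ} (hv : ∀ i, ‖v i‖ ≤ C) :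
    ‖∑ i, a i • v i‖ ≤ (∑ i, ‖a i‖) * C := by
  rw [Finset.sum_mul]
  refine (norm_sum_le _ _).trans (Finset.sum_le_sum fun i _ => ?_)
  rw [norm_smul]
  exact mul_le_mul_of_nonneg_left (hv i) (norm_nonneg _)

section Flow

variable {ι F : Type*} [Fintype ι] [NormedAddCommGroup F] [NormedSpace ℝ F]
  {W : ι → F → F} {a : ι → ℝ} {γ : ℝ → F} {y : F} {K : ℝ}

theorem norm_sub_le_of_hasDerivAt_sum_smul (hγ0 : γ 0 = y)
    (hγ : ∀ t ∈ Icc (0 : ℝ) 1, HasDerivAt γ (∑ i, a i • W i (γ t)) t)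
    (hK : ∀ i x, ‖W i x‖ ≤ K) {t : ℝ} (ht : t ∈ Icc (0 : ℝ) 1) :
    ‖γ t - y‖ ≤ (∑ i, ‖a i‖) * K * t := by
  have := (convex_Icc (0 : ℝ) 1).norm_image_sub_le_of_norm_hasDerivWithin_le
    (fun s hs => (hγ s hs).hasDerivWithinAt) (fun s _ => norm_sum_smul_le a fun i => hK i _)
    (left_mem_Icc.mpr zero_le_one) ht
  rwa [hγ0, sub_zero, Real.norm_of_nonneg ht.1] at this

theorem norm_sub_sub_sum_smul_le_sq (hγ0 : γ 0 = y)
    (hγ : ∀ t ∈ Icc (0 : ℝ) 1, HasDerivAt γ (∑ i, a i • W i (γ t)) t)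
    {L : NNReal} (hL : ∀ i, LipschitzWith L (W i)) (hK : ∀ i x, ‖W i x‖ ≤ K) (hK0 : 0 ≤ K) :
    ‖γ 1 - y - ∑ i, a i • W i y‖ ≤ L * K * (∑ i, ‖a i‖) ^ 2 := by
  set S := ∑ i, ‖a i‖
  set v := ∑ i, a i • W i y
  have hnear : ∀ t ∈ Icc (0 : ℝ) 1, ‖γ t - y‖ ≤ S * K := fun t ht =>
    (norm_sub_le_of_hasDerivAt_sum_smul hγ0 hγ hK ht).trans
      (mul_le_of_le_one_right (by positivity) ht.2)
  have hderiv : ∀ t ∈ Icc (0 : ℝ) 1, HasDerivWithinAt (fun t => γ t - t • v)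
      (∑ i, a i • W i (γ t) - v) (Icc 0 1) t := fun t ht =>
    ((hγ t ht).sub ((hasDerivAt_id t).smul_const v |>.congr_deriv (one_smul ℝ v))).hasDerivWithinAt
  have hbound : ∀ t ∈ Icc (0 : ℝ) 1, ‖∑ i, a i • W i (γ t) - v‖ ≤ S * (L * (S * K)) := by
    intro t ht
    simp only [v, ← Finset.sum_sub_distrib, ← smul_sub]
    refine norm_sum_smul_le a fun i => ((hL i).norm_sub_le _ _).trans ?_
    gcongr
    exact hnear t ht
  have := (convex_Icc (0 : ℝ) 1).norm_image_sub_le_of_norm_hasDerivWithin_le hderiv hbound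
    (left_mem_Icc.mpr zero_le_one) (right_mem_Icc.mpr zero_le_one)
  calc ‖γ 1 - y - v‖ = ‖(γ 1 - (1 : ℝ) • v) - (γ 0 - (0 : ℝ) • v)‖ := by
        rw [hγ0, one_smul, zero_smul, sub_zero, sub_right_comm]
    _ ≤ S * (L * (S * K)) * ‖(1 : ℝ) - 0‖ := this
    _ = L * K * S ^ 2 := by norm_num; ring

end Flow

theorem hasFDerivAt_of_norm_sub_le_sq {E F : Type*} [NormedAddCommGroup E] [NormedSpace ℝ E]
    [NormedAddCommGroup F] [NormedSpace ℝ F] {f : E → F} {T : E →L[ℝ] F} {x₀ : E} {M : ℝ}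
    (h : ∀ x, ‖f x - f x₀ - T (x - x₀)‖ ≤ M * ‖x - x₀‖ ^ 2) : HasFDerivAt f T x₀ := by
  rw [hasFDerivAt_iff_isLittleO_nhds_zero]
  refine (IsBigO.of_bound M (Eventually.of_forall fun x => ?_)).trans_isLittleO
    (isLittleO_norm_pow_id one_lt_two)
  simpa using h (x₀ + x)

theorem HasStrictFDerivAt.exists_mul_norm_sub_le {𝕜 E F : Type*} [NontriviallyNormedField 𝕜]
    [CompleteSpace 𝕜] [NormedAddCommGroup E] [NormedSpace 𝕜 E] [FiniteDimensional 𝕜 E]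
    [NormedAddCommGroup F] [NormedSpace 𝕜 F] {f : E → F} {T : E →L[𝕜] F} {x₀ : E}
    (hf : HasStrictFDerivAt f T x₀) (hT : Function.Injective T) :
    ∃ ε > (0 : ℝ), ∃ r > (0 : ℝ), ∀ a ∈ Metric.closedBall x₀ r, ∀ a' ∈ Metric.closedBall x₀ r,
      ε * ‖a - a'‖ ≤ ‖f a - f a'‖ := by
  obtain ⟨K, hK, hanti⟩ := (T : E →ₗ[𝕜] F).exists_antilipschitzWith (LinearMap.ker_eq_bot.mpr hT)
  -- `T` shrinks distances by at most the factor `K`; approximating it to within `(2K)⁻¹` keeps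
  -- half of its lower bound `K⁻¹`.
  obtain ⟨s, hs, happrox⟩ := hf.approximates_deriv_on_nhds (c := (2 * K)⁻¹) (Or.inr (by positivity))
  obtain ⟨r, hr, hrs⟩ := Metric.nhds_basis_closedBall.mem_iff.mp hs
  refine ⟨((2 * K)⁻¹ : NNReal), by positivity, r, hr, fun a ha a' ha' => ?_⟩
  have hTa : ‖a - a'‖ ≤ K * ‖T (a - a')‖ := by
    simpa [dist_eq_norm] using hanti.le_mul_dist a a'
  have hK' : (0 : ℝ) < K := hK
  have happ : ‖f a - f a' - T (a - a')‖ ≤ (2 * (K : ℝ))⁻¹ * ‖a - a'‖ := by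
    simpa using happrox a (hrs ha) a' (hrs ha')
  have hTd : ‖T (a - a')‖ ≤ ‖f a - f a'‖ + (2 * (K : ℝ))⁻¹ * ‖a - a'‖ := by
    have := norm_le_norm_add_norm_sub' (T (a - a')) (f a - f a')
    rw [norm_sub_rev (T _)] at this
    linarith
  have key : ‖a - a'‖ ≤ K * ‖f a - f a'‖ + ‖a - a'‖ / 2 :=
    calc ‖a - a'‖ ≤ K * ‖T (a - a')‖ := hTa
      _ ≤ K * (‖f a - f a'‖ + (2 * (K : ℝ))⁻¹ * ‖a - a'‖) := by gcongr
      _ = K * ‖f a - f a'‖ + ‖a - a'‖ / 2 := by field_simp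
  push_cast
  rw [inv_mul_le_iff₀ (by positivity)]
  linarith

theorem flow_approximation_nondegenerate_general
    (n N : ℕ)
    (y : EuclideanSpace ℝ (Fin N))
    (W : Fin n → EuclideanSpace ℝ (Fin N) → EuclideanSpace ℝ (Fin N))
    (L K : ℝ)
    (hLip : ∀ i x x', ‖W i x - W i x'‖ ≤ L * ‖x - x'‖)
    (hBdd : ∀ i x, ‖W i x‖ ≤ K)
    (hInd : LinearIndependent ℝ (fun i => W i y))
    (Ψ : EuclideanSpace ℝ (Fin n) → EuclideanSpace ℝ (Fin N))
    (hΨC2 : ContDiff ℝ 2 Ψ)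
    (hflow : ∀ a : EuclideanSpace ℝ (Fin n),
      ∃ γ : ℝ → EuclideanSpace ℝ (Fin N),
        ContDiffOn ℝ 1 γ (Icc (0:ℝ) 1) ∧
        γ 0 = y ∧
        (∀ t ∈ Icc (0:ℝ) 1, HasDerivAt γ (∑ i, a i • W i (γ t)) t) ∧
        Ψ a = γ 1) :
    ∃ ε₁ > (0:ℝ), ∃ r > (0:ℝ),
      ∀ a ∈ Metric.closedBall (0 : EuclideanSpace ℝ (Fin n)) r,
        ∀ a' ∈ Metric.closedBall (0 : EuclideanSpace ℝ (Fin n)) r,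
          ε₁ * ‖a - a'‖ ≤ ‖Ψ a - Ψ a'‖ := by
  let T : EuclideanSpace ℝ (Fin n) →L[ℝ] EuclideanSpace ℝ (Fin N) :=
    LinearMap.toContinuousLinearMap
      (Fintype.linearCombination ℝ (fun i => W i y) ∘ₗ (EuclideanSpace.equiv (Fin n) ℝ).toLinearMap)
  have hT_inj : Function.Injective T :=
    hInd.fintypeLinearCombination_injective.comp (EuclideanSpace.equiv (Fin n) ℝ).injective
  have hWLip : ∀ i, LipschitzWith L.toNNReal (W i) := fun i =>
    LipschitzWith.of_dist_le' fun x x' => by simpa only [dist_eq_norm] using hLip i x x'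
  have hquad : ∀ a, ‖Ψ a - y - T a‖ ≤ L.toNNReal * max K 0 * n ^ 2 * ‖a‖ ^ 2 := by
    intro a
    obtain ⟨γ, -, hγ0, hγ, hΨa⟩ := hflow a
    have hsum : ∑ i, ‖a i‖ ≤ n * ‖a‖ := by
      simpa using Finset.sum_le_sum (s := Finset.univ) fun i _ => PiLp.norm_apply_le a i
    rw [hΨa]
    calc ‖γ 1 - y - T a‖ ≤ L.toNNReal * max K 0 * (∑ i, ‖a i‖) ^ 2 :=
          norm_sub_sub_sum_smul_le_sq hγ0 hγ hWLip (fun i x => (hBdd i x).trans (le_max_left _ _))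
            (le_max_right _ _)
      _ ≤ L.toNNReal * max K 0 * n ^ 2 * ‖a‖ ^ 2 := by
          rw [mul_assoc _ ((n : ℝ) ^ 2), ← mul_pow]
          gcongr
  have hΨ0 : Ψ 0 = y := by simpa [sub_eq_zero] using hquad 0
  have hderiv : HasFDerivAt Ψ T 0 :=
    hasFDerivAt_of_norm_sub_le_sq fun a => by simpa [hΨ0] using hquad a
  have hstrict : HasStrictFDerivAt Ψ T 0 :=
    hderiv.fderiv ▸ hΨC2.contDiffAt.hasStrictFDerivAt (by norm_num)
  exact hstrict.exists_mul_norm_sub_le hT_inj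

/-- Non-degeneracy of the flow approximation (Lemma 9): the time-1 solution map
`Ψ(a) = exp(a₁W₁ + ⋯ + aₙWₙ)(y)` is lower-Lipschitz near `0` when `W₁(y),…,Wₙ(y)`
are linearly independent. -/
theorem flow_approximation_nondegenerate
    (n N : ℕ) (hn : 1 ≤ n) (hnN : n ≤ N)
    (y : EuclideanSpace ℝ (Fin N))
    (W : Fin n → EuclideanSpace ℝ (Fin N) → EuclideanSpace ℝ (Fin N))
    (L K : ℝ)
    (hLip : ∀ i x x', ‖W i x - W i x'‖ ≤ L * ‖x - x'‖)
    (hBdd : ∀ i x, ‖W i x‖ ≤ K)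
    (hInd : LinearIndependent ℝ (fun i => W i y))
    (Ψ : EuclideanSpace ℝ (Fin n) → EuclideanSpace ℝ (Fin N))
    (c₀ : ℝ)
    (hΨC2 : ContDiff ℝ 2 Ψ)
    (hD2 : ∀ a, ‖iteratedFDeriv ℝ 2 Ψ a‖ ≤ c₀)
    (hflow : ∀ a : EuclideanSpace ℝ (Fin n),
      ∃ γ : ℝ → EuclideanSpace ℝ (Fin N),
        ContDiffOn ℝ 1 γ (Icc (0:ℝ) 1) ∧
        γ 0 = y ∧
        (∀ t ∈ Icc (0:ℝ) 1, HasDerivAt γ (∑ i, a i • W i (γ t)) t) ∧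
        Ψ a = γ 1) :
    ∃ ε₁ > (0:ℝ), ∃ r > (0:ℝ),
      ∀ a ∈ Metric.closedBall (0 : EuclideanSpace ℝ (Fin n)) r,
        ∀ a' ∈ Metric.closedBall (0 : EuclideanSpace ℝ (Fin n)) r,
          ε₁ * ‖a - a'‖ ≤ ‖Ψ a - Ψ a'‖ :=
  flow_approximation_nondegenerate_general n N y W L K hLip hBdd hInd Ψ hΨC2 hflow
end

section
/- Let ℓ ≥ 1, set m = ℓ(ℓ+1)/2, and let d ≥ m. Let V₁, …, V_ℓ : ℝ^d → ℝ^d be continuously differentiable vector fields and let y ∈ ℝ^d be a point at which the m vectors V_i(y) (1 ≤ i ≤ ℓ) and [V_i, V_j](y) (1 ≤ i < j ≤ ℓ) are linearly independent. Define Φ_y : ℝ^ℓ × ℝ^{ℓ(ℓ−1)/2} → ℝ^d by Φ_y(a, b) = y + Σ_{i=1}^ℓ a_i V_i(y) + Σ_{1≤i<j≤ℓ} b_{ij} [V_i, V_j](y) + (1/2) Σ_{i,j=1}^ℓ a_i a_j DV_j(y)(V_i(y)). Then Φ_y is infinitely differentiable, and there exist ε₁ > 0 and r > 0 such that |Φ_y(p)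 − Φ_y(q)| ≥ ε₁ |p − q| for all p, q in the closed ball of radius r centered at 0 in ℝ^{m}. -/
noncomputable def lieBracket {E : Type*} [NormedAddCommGroup E] [NormedSpace ℝ E]
    (V W : E → E) : E → E :=
  fun x => fderiv ℝ W x (V x) - fderiv ℝ V x (W x)

lemma euclid_abs_coord_le {ι : Type*} [Fintype ι] (c : EuclideanSpace ℝ ι) (i : ι) :
    |c i| ≤ ‖c‖ := by
  rw [EuclideanSpace.norm_eq, ← Real.sqrt_sq_eq_abs]
  apply Real.sqrt_le_sqrt
  have h : (c i) ^ 2 = ‖c i‖ ^ 2 := by rw [Real.norm_eq_abs, sq_abs]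
  rw [h]
  exact Finset.single_le_sum (f := fun j => ‖c j‖ ^ 2)
    (fun j _ => sq_nonneg _) (Finset.mem_univ i)

/-- The linear map `c ↦ ∑ s, c s • u s` on a Euclidean space. -/
noncomputable def euclidComb {ι : Type*} [Fintype ι] {F : Type*} [NormedAddCommGroup F]
    [NormedSpace ℝ F] (u : ι → F) : EuclideanSpace ℝ ι →ₗ[ℝ] F where
  toFun c := ∑ s, c s • u s
  map_add' a b := by
    simp only [PiLp.add_apply, add_smul, Finset.sum_add_distrib]
  map_smul' r a := by
    simp only [PiLp.smul_apply, smul_eq_mul, RingHom.id_apply, Finset.smul_sum, smul_smul]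

set_option maxHeartbeats 1000000 in
/-- Non-degeneracy of the Taylor approximation (Lemma 10): the second-order Taylor map
`Φ_y(a,b) = y + Σ aᵢ Vᵢ(y) + Σ_{i<j} b_{ij} [Vᵢ,Vⱼ](y) + ½ Σ aᵢaⱼ DVⱼ(y)(Vᵢ(y))`
is smooth and lower-Lipschitz near `0`, provided the vectors `Vᵢ(y)` and `[Vᵢ,Vⱼ](y)`,
`i < j`, are linearly independent. -/
theorem taylor_approximation_nondegenerate
    (ℓ d : ℕ) (hℓ : 1 ≤ ℓ) (hd : ℓ * (ℓ + 1) / 2 ≤ d)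
    (V : Fin ℓ → EuclideanSpace ℝ (Fin d) → EuclideanSpace ℝ (Fin d))
    (hV : ∀ i, ContDiff ℝ 1 (V i))
    (y : EuclideanSpace ℝ (Fin d))
    (hInd : LinearIndependent ℝ
      (Sum.elim (fun i : Fin ℓ => V i y)
        (fun p : {q : Fin ℓ × Fin ℓ // q.1 < q.2} =>
          lieBracket (V p.1.1) (V p.1.2) y)))
    (Φ : EuclideanSpace ℝ (Fin ℓ ⊕ {q : Fin ℓ × Fin ℓ // q.1 < q.2}) →
          EuclideanSpace ℝ (Fin d))
    (hΦ : ∀ c, Φ c = y + (∑ i : Fin ℓ, c (Sum.inl i) • V i y)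
        + (∑ p : {q : Fin ℓ × Fin ℓ // q.1 < q.2},
            c (Sum.inr p) • lieBracket (V p.1.1) (V p.1.2) y)
        + (1 / 2 : ℝ) • ∑ i : Fin ℓ, ∑ j : Fin ℓ,
            (c (Sum.inl i) * c (Sum.inl j)) • fderiv ℝ (V j) y (V i y)) :
    ContDiff ℝ (⊤ : ℕ∞) Φ ∧
      ∃ ε₁ > (0:ℝ), ∃ r > (0:ℝ),
        ∀ p ∈ Metric.closedBall
            (0 : EuclideanSpace ℝ (Fin ℓ ⊕ {q : Fin ℓ × Fin ℓ // q.1 < q.2})) r,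
          ∀ q ∈ Metric.closedBall
              (0 : EuclideanSpace ℝ (Fin ℓ ⊕ {q : Fin ℓ × Fin ℓ // q.1 < q.2})) r,
            ε₁ * ‖p - q‖ ≤ ‖Φ p - Φ q‖ := by
  classical
  set u : Fin ℓ ⊕ {q : Fin ℓ × Fin ℓ // q.1 < q.2} → EuclideanSpace ℝ (Fin d) :=
    Sum.elim (fun i => V i y) (fun p => lieBracket (V p.1.1) (V p.1.2) y) with hu
  set w : Fin ℓ → Fin ℓ → EuclideanSpace ℝ (Fin d) :=
    fun i j => fderiv ℝ (V j) y (V i y) with hw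
  set A : EuclideanSpace ℝ (Fin ℓ ⊕ {q : Fin ℓ × Fin ℓ // q.1 < q.2}) →ₗ[ℝ]
      EuclideanSpace ℝ (Fin d) := euclidComb u with hA'
  set Q : EuclideanSpace ℝ (Fin ℓ ⊕ {q : Fin ℓ × Fin ℓ // q.1 < q.2}) →
      EuclideanSpace ℝ (Fin d) :=
    fun c => (1/2 : ℝ) • ∑ i, ∑ j, (c (Sum.inl i) * c (Sum.inl j)) • w i j with hQ'
  have hΦ' : ∀ c, Φ c = y + A c + Q c := by
    intro c
    rw [hΦ c]
    have hsum : A c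
        = (∑ i : Fin ℓ, c (Sum.inl i) • V i y)
          + ∑ p : {q : Fin ℓ × Fin ℓ // q.1 < q.2},
              c (Sum.inr p) • lieBracket (V p.1.1) (V p.1.2) y := by
      show (∑ s, c s • u s) = _
      rw [Fintype.sum_sum_type]
      rfl
    rw [hsum, hQ']
    abel
  have hcoord : ∀ s : Fin ℓ ⊕ {q : Fin ℓ × Fin ℓ // q.1 < q.2},
      ContDiff ℝ (⊤ : ℕ∞) (fun c : EuclideanSpace ℝ (Fin ℓ ⊕ {q : Fin ℓ × Fin ℓ // q.1 < q.2}) =>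
        c s) :=
    fun s => (EuclideanSpace.proj (𝕜 := ℝ) s).contDiff
  have hA : ContDiff ℝ (⊤ : ℕ∞) (fun c => A c) := A.toContinuousLinearMap.contDiff
  have hQ : ContDiff ℝ (⊤ : ℕ∞) Q := by
    rw [hQ']
    apply ContDiff.const_smul
    apply ContDiff.sum; intro i _
    apply ContDiff.sum; intro j _
    exact ((hcoord _).mul (hcoord _)).smul contDiff_const
  have hΦsmooth : ContDiff ℝ (⊤ : ℕ∞) Φ := by
    have hfun : Φ = fun c => y + A c + Q c := funext hΦ'
    rw [hfun]
    exact (contDiff_const.add hA).add hQ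
  refine ⟨hΦsmooth, ?_⟩
  have hker : LinearMap.ker A = ⊥ := by
    rw [LinearMap.ker_eq_bot']
    intro c hc
    have h0 := Fintype.linearIndependent_iff.mp hInd c hc
    ext s
    exact h0 s
  obtain ⟨K, hK0, hAnti⟩ := A.exists_antilipschitzWith hker
  have hKpos : (0:ℝ) < (K:ℝ) := by exact_mod_cast hK0
  have hεpos : 0 < (K:ℝ)⁻¹ := inv_pos.mpr hKpos
  set ε : ℝ := (K:ℝ)⁻¹ with hε
  have hAlow : ∀ p q : EuclideanSpace ℝ (Fin ℓ ⊕ {q : Fin ℓ × Fin ℓ // q.1 < q.2}),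
      ε * ‖p - q‖ ≤ ‖A p - A q‖ := by
    intro p q
    have h := hAnti.le_mul_dist p q
    rw [dist_eq_norm, dist_eq_norm] at h
    rw [hε, inv_mul_le_iff₀ hKpos]
    exact h
  set M : ℝ := ∑ i : Fin ℓ, ∑ j : Fin ℓ, ‖w i j‖ with hM
  have hMnonneg : 0 ≤ M :=
    Finset.sum_nonneg fun i _ => Finset.sum_nonneg fun j _ => norm_nonneg _
  have hQbound : ∀ p q : EuclideanSpace ℝ (Fin ℓ ⊕ {q : Fin ℓ × Fin ℓ // q.1 < q.2}),
      ‖Q p - Q q‖ ≤ (1/2) * ((‖p‖ + ‖q‖) * M) * ‖p - q‖ := by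
    intro p q
    have hQsub : Q p - Q q = (1/2:ℝ) • ∑ i, ∑ j,
        (p (Sum.inl i) * p (Sum.inl j) - q (Sum.inl i) * q (Sum.inl j)) • w i j := by
      rw [hQ']
      simp only [← smul_sub, ← Finset.sum_sub_distrib, ← sub_smul]
    have term : ∀ i j : Fin ℓ,
        |p (Sum.inl i) * p (Sum.inl j) - q (Sum.inl i) * q (Sum.inl j)|
          ≤ (‖p‖ + ‖q‖) * ‖p - q‖ := by
      intro i j
      have h1 : p (Sum.inl i) * p (Sum.inl j) - q (Sum.inl i) * q (Sum.inl j)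
          = p (Sum.inl i) * ((p - q) (Sum.inl j)) + ((p - q) (Sum.inl i)) * q (Sum.inl j) := by
        rw [PiLp.sub_apply, PiLp.sub_apply]
        ring
      rw [h1]
      have h2 : |p (Sum.inl i) * ((p - q) (Sum.inl j)) + ((p - q) (Sum.inl i)) * q (Sum.inl j)|
          ≤ |p (Sum.inl i)| * |(p - q) (Sum.inl j)|
            + |(p - q) (Sum.inl i)| * |q (Sum.inl j)| := by
        refine (abs_add_le _ _).trans ?_
        rw [abs_mul, abs_mul]
      refine h2.trans ?_
      have h3 : |p (Sum.inl i)| * |(p - q) (Sum.inl j)| + |(p - q) (Sum.inl i)| * |q (Sum.inl j)|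
          ≤ ‖p‖ * ‖p - q‖ + ‖p - q‖ * ‖q‖ := by
        gcongr <;>
          first
            | exact euclid_abs_coord_le _ _
            | exact abs_nonneg _
      refine h3.trans (le_of_eq ?_)
      ring
    rw [hQsub, norm_smul, Real.norm_eq_abs]
    have h2 : |(1/2:ℝ)| = 1/2 := by norm_num
    rw [h2]
    have hsumle : ‖∑ i, ∑ j,
        (p (Sum.inl i) * p (Sum.inl j) - q (Sum.inl i) * q (Sum.inl j)) • w i j‖
        ≤ (‖p‖ + ‖q‖) * ‖p - q‖ * M := by
      refine le_trans (norm_sum_le _ _) ?_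
      refine le_trans (Finset.sum_le_sum fun i _ => norm_sum_le _ _) ?_
      have step : ∀ i ∈ Finset.univ, ∀ j ∈ Finset.univ,
          ‖(p (Sum.inl i) * p (Sum.inl j) - q (Sum.inl i) * q (Sum.inl j)) • w i j‖
            ≤ ((‖p‖ + ‖q‖) * ‖p - q‖) * ‖w i j‖ := by
        intro i _ j _
        rw [norm_smul, Real.norm_eq_abs]
        exact mul_le_mul_of_nonneg_right (term i j) (norm_nonneg _)
      refine le_trans (Finset.sum_le_sum fun i hi =>
        Finset.sum_le_sum fun j hj => step i hi j hj) ?_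
      rw [hM, Finset.mul_sum]
      refine le_of_eq (Finset.sum_congr rfl fun i _ => ?_)
      rw [Finset.mul_sum]
    refine le_trans (mul_le_mul_of_nonneg_left hsumle (by norm_num : (0:ℝ) ≤ 1/2))
      (le_of_eq (by ring))
  set r : ℝ := ε / (2 * (M + 1)) with hr
  have h2M : (0:ℝ) < 2 * (M + 1) := by linarith
  have hrpos : 0 < r := div_pos hεpos h2M
  have hrM : r * M ≤ ε / 2 := by
    rw [hr, div_mul_eq_mul_div, div_le_div_iff₀ h2M (by norm_num : (0:ℝ) < 2)]
    nlinarith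
  refine ⟨ε/2, by positivity, r, hrpos, ?_⟩
  intro p hp q hq
  rw [Metric.mem_closedBall, dist_zero_right] at hp hq
  have hdiff : Φ p - Φ q = A (p - q) + (Q p - Q q) := by
    rw [hΦ' p, hΦ' q, map_sub]
    abel
  have hAl := hAlow p q
  rw [← map_sub] at hAl
  have hQl : ‖Q p - Q q‖ ≤ r * M * ‖p - q‖ := by
    refine (hQbound p q).trans ?_
    have hmul : (1/2) * ((‖p‖ + ‖q‖) * M) ≤ r * M := by
      have h2r : ‖p‖ + ‖q‖ ≤ 2 * r := by linarith
      have := mul_le_mul_of_nonneg_right h2r hMnonneg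
      linarith
    exact mul_le_mul_of_nonneg_right hmul (norm_nonneg _)
  have hnorm : ‖A (p - q)‖ ≤ ‖A (p - q) + (Q p - Q q)‖ + ‖Q p - Q q‖ := by
    have h := norm_add_le (A (p - q) + (Q p - Q q)) (-(Q p - Q q))
    rw [add_neg_cancel_right, norm_neg] at h
    exact h
  rw [hdiff]
  have ht : 0 ≤ ‖p - q‖ := norm_nonneg _
  have h5 : r * M * ‖p - q‖ ≤ ε / 2 * ‖p - q‖ := mul_le_mul_of_nonneg_right hrM ht
  linarith
end

section
/- Let n, N ≥ 1, c₀ > 0 and ε₁ > 0. Let Ψ : ℝⁿ → ℝ^N be twice continuously differentiable with ‖D²Ψ(z)‖ ≤ c₀ for all z ∈ ℝⁿ, and suppose that |DΨ(0)(h)| ≥ 2ε₁ |h| for all h ∈ ℝⁿ. Then for all a, a′ in the closed ball of radius ε₁/(2c₀) centered at 0 in ℝⁿ, one has |Ψ(a) − Ψ(a′)| ≥ ε₁ |a − a′|. -/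
/-!
The derivative of `Ψ` is `c₀`-Lipschitz because `D²Ψ` is bounded by `c₀`, so on the ball of
radius `ε₁ / (2c₀)` it stays within `ε₁ / 2` of `DΨ(0)`. By the mean value inequality `Ψ` is
then within `(ε₁ / 2)|a - a'|` of its linearisation `DΨ(0)(a - a')`, whose norm is at least
`2ε₁|a - a'|`.
-/

open NNReal

section

variable {𝕜 E F : Type*} [RCLike 𝕜] [NormedAddCommGroup E] [NormedSpace 𝕜 E]
  [NormedAddCommGroup F] [NormedSpace 𝕜 F]

theorem norm_fderiv_fderiv_eq_norm_iteratedFDeriv_two (f : E → F) (x : E) :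
    ‖fderiv 𝕜 (fderiv 𝕜 f) x‖ = ‖iteratedFDeriv 𝕜 2 f x‖ :=
  (norm_iteratedFDeriv_one _).symm.trans norm_iteratedFDeriv_fderiv

theorem lipschitzWith_fderiv_of_norm_iteratedFDeriv_two_le {f : E → F} {C : ℝ≥0}
    (hf : ContDiff 𝕜 2 f) (hC : ∀ x, ‖iteratedFDeriv 𝕜 2 f x‖ ≤ C) :
    LipschitzWith C (fderiv 𝕜 f) :=
  lipschitzWith_of_nnnorm_fderiv_le ((hf.fderiv_right (m := 1) le_rfl).differentiable one_ne_zero)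
    fun x ↦ by
      rw [← NNReal.coe_le_coe, coe_nnnorm, norm_fderiv_fderiv_eq_norm_iteratedFDeriv_two]
      exact hC x

end

theorem Convex.mul_norm_sub_le_norm_image_sub {E F : Type*} [NormedAddCommGroup E]
    [NormedSpace ℝ E] [NormedAddCommGroup F] [NormedSpace ℝ F] {f : E → F} {s : Set E}
    {L : E →L[ℝ] F} {m δ : ℝ} (hs : Convex ℝ s) (hf : ∀ x ∈ s, DifferentiableAt ℝ f x)
    (hclose : ∀ x ∈ s, ‖fderiv ℝ f x - L‖ ≤ δ) (hL : ∀ h, m * ‖h‖ ≤ ‖L h‖)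
    {x y : E} (hx : x ∈ s) (hy : y ∈ s) :
    (m - δ) * ‖x - y‖ ≤ ‖f x - f y‖ := by
  have hlin : ‖f x - f y - L (x - y)‖ ≤ δ * ‖x - y‖ :=
    hs.norm_image_sub_le_of_norm_fderiv_le' hf hclose hy hx
  have htri : ‖L (x - y)‖ ≤ ‖f x - f y‖ + ‖f x - f y - L (x - y)‖ :=
    norm_le_norm_add_norm_sub _ _
  linarith [hL (x - y)]

/-- Quantitative local lower-Lipschitz bound: a `C²` map whose second derivative is
globally bounded by `c₀` and whose derivative at `0` satisfies `|DΨ(0)h| ≥ 2ε₁|h|`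
is lower-Lipschitz with constant `ε₁` on the closed ball of radius `ε₁/(2c₀)`. -/
theorem lower_lipschitz_of_injective_derivative
    (n N : ℕ) (c₀ ε₁ : ℝ) (hc₀ : 0 < c₀) (hε₁ : 0 < ε₁)
    (Ψ : EuclideanSpace ℝ (Fin n) → EuclideanSpace ℝ (Fin N))
    (hC2 : ContDiff ℝ 2 Ψ)
    (hD2 : ∀ z, ‖iteratedFDeriv ℝ 2 Ψ z‖ ≤ c₀)
    (hlow : ∀ h : EuclideanSpace ℝ (Fin n), 2 * ε₁ * ‖h‖ ≤ ‖fderiv ℝ Ψ 0 h‖) :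
    ∀ a ∈ Metric.closedBall (0 : EuclideanSpace ℝ (Fin n)) (ε₁ / (2 * c₀)),
      ∀ a' ∈ Metric.closedBall (0 : EuclideanSpace ℝ (Fin n)) (ε₁ / (2 * c₀)),
        ε₁ * ‖a - a'‖ ≤ ‖Ψ a - Ψ a'‖ := by
  intro a ha a' ha'
  have hlip : LipschitzWith ⟨c₀, hc₀.le⟩ (fderiv ℝ Ψ) :=
    lipschitzWith_fderiv_of_norm_iteratedFDeriv_two_le hC2 hD2
  have hclose : ∀ x ∈ Metric.closedBall (0 : EuclideanSpace ℝ (Fin n)) (ε₁ / (2 * c₀)),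
      ‖fderiv ℝ Ψ x - fderiv ℝ Ψ 0‖ ≤ ε₁ / 2 := fun x hx ↦ calc
    ‖fderiv ℝ Ψ x - fderiv ℝ Ψ 0‖ ≤ c₀ * dist x 0 := by
      rw [← dist_eq_norm]; exact hlip.dist_le_mul x 0
    _ ≤ c₀ * (ε₁ / (2 * c₀)) := by gcongr; exact hx
    _ = ε₁ / 2 := by field_simp
  have hmain := (convex_closedBall _ _).mul_norm_sub_le_norm_image_sub
    (fun x _ ↦ (hC2.differentiable two_ne_zero).differentiableAt) hclose hlow ha ha'
  calc ε₁ * ‖a - a'‖ ≤ (2 * ε₁ - ε₁ / 2) * ‖a - a'‖ := by gcongr; linarith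
    _ ≤ ‖Ψ a - Ψ a'‖ := hmain
end

section
/- Fix d ≥ 2 and work on ℝ^{2d+1} with coordinates (x₁,…,x_d, y₁,…,y_d, t). For 1 ≤ i ≤ d let X_i = ∂_{x_i} + 2y_i ∂_t and Y_i = ∂_{y_i} − 2x_i ∂_t, and order the ℓ = 2d vector fields as V₁ = X₁, …, V_d = X_d, V_{d+1} = Y₁, …, V_{2d} = Y_d. Set m = ℓ(ℓ+1)/2 = d(2d+1). Then for every integer c ≥ 1 and every choice of points p₁, …, p_c ∈ ℝ^{2d+1}, the family of m vectors in ℝ^{c(2d+1)} consisting of the stacked evaluations (V_i(p₁), …, V_i(p_c)) for 1 ≤ i ≤ ℓ and ([V_j,V_k](p₁), …, [V_j,V_k](p_c)) for 1 ≤ j < k ≤ ℓ is linearly dependent; equivalently, the c(2d+1) × m reconstruction matrix with these columns has rank strictly less than m. -/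
theorem lieBracket_const_add_smul {E : Type*} [NormedAddCommGroup E] [NormedSpace ℝ E]
    (u v w : E) (φ ψ : E →L[ℝ] ℝ) (hφ : φ w = 0) (hψ : ψ w = 0) :
    lieBracket (fun p => u + φ p • w) (fun p => v + ψ p • w) = fun _ => (ψ u - φ v) • w := by
  have hD : ∀ (a : E) (χ : E →L[ℝ] ℝ) (p : E),
      fderiv ℝ (fun p => a + χ p • w) p = χ.smulRight w := fun a χ p => by
    rw [fderiv_const_add]
    exact (χ.smulRight w).fderiv
  funext p
  simp only [lieBracket, hD, ContinuousLinearMap.smulRight_apply, map_add, map_smul, hφ, hψ,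
    zero_smul, smul_zero, add_zero, sub_smul]

open EuclideanSpace in
theorem lieBracket_heisenberg_pair {ι : Type*} [Fintype ι] [DecidableEq ι] {a b t : ι}
    (hat : a ≠ t) (hbt : b ≠ t) :
    lieBracket (fun p : EuclideanSpace ℝ ι => single a 1 + (2 * p b) • single t (1 : ℝ))
      (fun p => single b 1 - (2 * p a) • single t 1) = fun _ => (-4 : ℝ) • single t 1 := by
  have hY : (fun p : EuclideanSpace ℝ ι => single b 1 - (2 * p a) • single t (1 : ℝ)) =
      fun p => single b 1 + ((-2 : ℝ) • proj a : EuclideanSpace ℝ ι →L[ℝ] ℝ) p • single t 1 := by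
    funext p; simp [sub_eq_add_neg, ← neg_smul]
  change lieBracket
    (fun p => single a 1 + ((2 : ℝ) • proj b : EuclideanSpace ℝ ι →L[ℝ] ℝ) p • single t 1) _ = _
  rw [hY, lieBracket_const_add_smul]
  · norm_num
  · simp [hbt.symm]
  · simp [hat.symm]

/-- For the Heisenberg-type generators `Xᵢ = ∂_{xᵢ} + 2yᵢ∂_t`, `Yᵢ = ∂_{yᵢ} − 2xᵢ∂_t`
on `ℝ^{2d+1}` (with `d ≥ 2`), ordered as `V₁ = X₁, …, V_d = X_d, V_{d+1} = Y₁, …,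
V_{2d} = Y_d`, the `m = d(2d+1)` stacked evaluations of the `Vᵢ` and of the brackets
`[Vⱼ,Vₖ]`, `j < k`, at any finite family of points are linearly dependent: the
reconstruction matrix never has full rank `m`. -/
theorem heisenberg_reconstruction_degenerate
    (d : ℕ) (hd : 2 ≤ d)
    (X Y : Fin d → EuclideanSpace ℝ (Fin (2 * d + 1)) → EuclideanSpace ℝ (Fin (2 * d + 1)))
    (hX : ∀ (i : Fin d) (p : EuclideanSpace ℝ (Fin (2 * d + 1))),
      X i p = EuclideanSpace.single (⟨i.val, by have := i.2; omega⟩ : Fin (2 * d + 1)) (1:ℝ)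
        + (2 * p ⟨d + i.val, by have := i.2; omega⟩) •
            EuclideanSpace.single (⟨2 * d, by omega⟩ : Fin (2 * d + 1)) (1:ℝ))
    (hY : ∀ (i : Fin d) (p : EuclideanSpace ℝ (Fin (2 * d + 1))),
      Y i p = EuclideanSpace.single (⟨d + i.val, by have := i.2; omega⟩ : Fin (2 * d + 1)) (1:ℝ)
        - (2 * p ⟨i.val, by have := i.2; omega⟩) •
            EuclideanSpace.single (⟨2 * d, by omega⟩ : Fin (2 * d + 1)) (1:ℝ))
    (V : Fin (2 * d) → EuclideanSpace ℝ (Fin (2 * d + 1)) → EuclideanSpace ℝ (Fin (2 * d + 1)))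
    (hV : ∀ k : Fin (2 * d),
      V k = if h : (k : ℕ) < d then X ⟨k, h⟩ else Y ⟨(k : ℕ) - d, by have := k.2; omega⟩)
    (c : ℕ)
    (pts : Fin c → EuclideanSpace ℝ (Fin (2 * d + 1))) :
    ¬ LinearIndependent ℝ
        (Sum.elim
          (fun i : Fin (2 * d) => fun a : Fin c => V i (pts a))
          (fun jk : {q : Fin (2 * d) × Fin (2 * d) // q.1 < q.2} =>
            fun a : Fin c => lieBracket (V jk.1.1) (V jk.1.2) (pts a))) := by
  let pair (i : Fin d) : {q : Fin (2 * d) × Fin (2 * d) // q.1 < q.2} :=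
    ⟨(⟨i, by omega⟩, ⟨d + i, by omega⟩), by simp [Fin.lt_def]; omega⟩
  have bracket_pair (i : Fin d) :
      lieBracket (V (pair i).1.1) (V (pair i).1.2) =
        fun _ => (-4 : ℝ) • EuclideanSpace.single ⟨2 * d, by omega⟩ 1 := by
    have hXi : V (pair i).1.1 = X i := by
      rw [hV, dif_pos i.2]
    have hYi : V (pair i).1.2 = Y i := by
      rw [hV, dif_neg (by simp [pair])]
      simp [pair]
    rw [hXi, hYi, funext (hX i), funext (hY i)]
    exact lieBracket_heisenberg_pair (by simp [Fin.ext_iff]; omega) (by simp [Fin.ext_iff]; omega)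
  intro hli
  have hne : pair ⟨0, by omega⟩ ≠ pair ⟨1, by omega⟩ := by simp [pair, Subtype.ext_iff]
  refine hne (Sum.inr_injective (hli.injective ?_))
  funext a
  simp only [Sum.elim_inr, bracket_pair]
end

section
/- On the open subset Ω = {(θ₁, θ₂, b, q) ∈ ℝ⁴ : 0 < q < 1} of ℝ⁴, define the vector fields V₁(θ₁,θ₂,b,q) = (1/q, 1/(1−q), 1, 0) and V₂(θ₁,θ₂,b,q) = (0, 0, 0, 1). Then [V₁,V₂](θ₁,θ₂,b,q) = (1/q², −1/(1−q)², 0, 0), and at every point of Ω the three vectors V₁, V₂, [V₁,V₂] are linearly independent in ℝ⁴. -/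
theorem lieBracket_const_right {E : Type*} [NormedAddCommGroup E] [NormedSpace ℝ E]
    (V : E → E) (c x : E) :
    lieBracket V (fun _ => c) x = -fderiv ℝ V x c := by
  simp [lieBracket]

section

variable {𝕜 : Type*} [NontriviallyNormedField 𝕜]

theorem HasDerivAt.hasFDerivAt_comp_clm {E F : Type*} [NormedAddCommGroup E] [NormedSpace 𝕜 E]
    [NormedAddCommGroup F] [NormedSpace 𝕜 F] {f : 𝕜 → F} {f' : F} {x : E} (ℓ : E →L[𝕜] 𝕜)
    (hf : HasDerivAt f f' (ℓ x)) :
    HasFDerivAt (fun y => f (ℓ y)) (ℓ.smulRight f') x := by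
  have hcomp : (ContinuousLinearMap.toSpanSingleton 𝕜 f').comp ℓ = ℓ.smulRight f' := by
    ext v
    simp
  rw [← hcomp]
  exact hf.hasFDerivAt.comp x ℓ.hasFDerivAt

theorem PiLp.hasDerivAt_toLp {p : ENNReal} [Fact (1 ≤ p)] {ι : Type*} [Fintype ι]
    {E : ι → Type*} [∀ i, NormedAddCommGroup (E i)] [∀ i, NormedSpace 𝕜 (E i)]
    {f : 𝕜 → ∀ i, E i} {f' : ∀ i, E i} {t : 𝕜}
    (hf : ∀ i, HasDerivAt (fun s => f s i) (f' i) t) :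
    HasDerivAt (fun s => WithLp.toLp p (f s)) (WithLp.toLp p f') t :=
  (PiLp.hasFDerivAt_toLp p (f t)).comp_hasDerivAt t (hasDerivAt_pi.2 hf)

end

theorem linearIndependent_three_of_triangular {K M : Type*} [CommRing K] [NoZeroDivisors K]
    [AddCommGroup M] [Module K M] {u v w : M} (f g h : Module.Dual K M)
    (hu : f u ≠ 0) (hvf : f v = 0) (hwf : f w = 0) (hv : g v ≠ 0) (hwg : g w = 0)
    (hw : h w ≠ 0) :
    LinearIndependent K ![u, v, w] := by
  rw [Fintype.linearIndependent_iff]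
  intro c hc
  simp only [Fin.sum_univ_three, Matrix.cons_val] at hc
  have hc₀ : c 0 = 0 := by simpa [hvf, hwf, hu] using congrArg f hc
  have hc₁ : c 1 = 0 := by simpa [hc₀, hwg, hv] using congrArg g hc
  have hc₂ : c 2 = 0 := by simpa [hc₀, hc₁, hw] using congrArg h hc
  intro i
  fin_cases i <;> assumption

theorem hasDerivAt_cvt_profile {q : ℝ} (hq : q ≠ 0) (hq' : 1 - q ≠ 0) :
    HasDerivAt (fun s : ℝ => WithLp.toLp 2 ![1 / s, 1 / (1 - s), 1, 0])
      (WithLp.toLp 2 ![-(1 / q ^ 2), 1 / (1 - q) ^ 2, 0, 0]) q := by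
  apply PiLp.hasDerivAt_toLp
  intro i
  fin_cases i
  · simpa [one_div] using hasDerivAt_inv hq
  · simpa [one_div, Pi.inv_def] using ((hasDerivAt_id q).const_sub 1).inv hq'
  · exact hasDerivAt_const q (1 : ℝ)
  · exact hasDerivAt_const q (0 : ℝ)

/-- Continuously-variable-transmission example: on `Ω = {(θ₁,θ₂,b,q) : 0 < q < 1}`,
for `V₁ = (1/q, 1/(1−q), 1, 0)` and `V₂ = (0,0,0,1)`, the bracket is
`[V₁,V₂] = (1/q², −1/(1−q)², 0, 0)`, and `V₁, V₂, [V₁,V₂]` are linearly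
independent at every point of `Ω`. -/
theorem cvt_reconstruction_matrix_full_rank
    (V₁ V₂ : EuclideanSpace ℝ (Fin 4) → EuclideanSpace ℝ (Fin 4))
    (hV₁ : ∀ p, V₁ p = (WithLp.equiv 2 (Fin 4 → ℝ)).symm
        ![1 / p 3, 1 / (1 - p 3), 1, 0])
    (hV₂ : ∀ p, V₂ p = (WithLp.equiv 2 (Fin 4 → ℝ)).symm ![0, 0, 0, 1]) :
    ∀ p : EuclideanSpace ℝ (Fin 4), 0 < p 3 → p 3 < 1 →
      (lieBracket V₁ V₂ p = (WithLp.equiv 2 (Fin 4 → ℝ)).symm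
          ![1 / (p 3) ^ 2, -(1 / (1 - p 3) ^ 2), 0, 0]) ∧
      LinearIndependent ℝ ![V₁ p, V₂ p, lieBracket V₁ V₂ p] := by
  intro p hq₀ hq₁
  simp only [WithLp.equiv_symm_apply] at hV₁ hV₂ ⊢
  have hDV₁ : HasFDerivAt V₁ ((EuclideanSpace.proj (𝕜 := ℝ) (3 : Fin 4)).smulRight
      (WithLp.toLp 2 ![-(1 / p 3 ^ 2), 1 / (1 - p 3) ^ 2, 0, 0])) p := by
    rw [funext hV₁]
    exact HasDerivAt.hasFDerivAt_comp_clm (EuclideanSpace.proj (3 : Fin 4))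
      (hasDerivAt_cvt_profile hq₀.ne' (sub_ne_zero.2 hq₁.ne'))
  have hbracket : lieBracket V₁ V₂ p =
      WithLp.toLp 2 ![1 / p 3 ^ 2, -(1 / (1 - p 3) ^ 2), 0, 0] := by
    rw [funext hV₂, lieBracket_const_right, hDV₁.fderiv]
    ext i
    fin_cases i <;> simp
  refine ⟨hbracket, ?_⟩
  rw [hbracket, hV₁, hV₂]
  exact linearIndependent_three_of_triangular (EuclideanSpace.proj (2 : Fin 4)).toLinearMap
    (EuclideanSpace.proj (3 : Fin 4)).toLinearMap (EuclideanSpace.proj (0 : Fin 4)).toLinearMap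
    (by simp) (by simp) (by simp) (by simp) (by simp) (by simp [hq₀.ne'])
end
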